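/- arXiv:2312.01036 — 2 statements merged into one kernel-verified Lean document; each statement's English description precedes it below -/
import Mathlib

section
/- (Weighted version of Lemma 'Part 1'.) Let N ≥ 1, let G be a simple graph on Fin N, let J assign a nonnegative real weight J_{ij} ≥ 0 to each edge {i,j} of G, and let J_i ≥ 0 for each i ∈ Fin N. Let H = -∑_{{i,j} ∈ E_G} J_{ij} Z_iZ_j - ∑_{i ∈ Fin N} J_i X_i. For any finite set V ⊆ Fin N, let φ_V be the product state given by φ_V(x) = (1/√2)^(N - |V|) if x i = 0 for all i ∈ V, and φ_V(x) = 0 otherwise. Then ⟨φ_V, H φ_V⟩ = -∑_{{i,j} ∈ E(V)} J_{ij} - ∑_{i ∉ V} J_i, where E(V) is the set of edges of G with both endpoints in V. -/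
open scoped BigOperators Classical

noncomputable section

/-- Inner product on the `N`-qubit state space of functions `(Fin N → Fin 2) → ℂ`:
`⟨ψ, φ⟩ = ∑ x, conj (ψ x) * φ x`. -/
def qInner {N : ℕ} (ψ φ : (Fin N → Fin 2) → ℂ) : ℂ :=
  ∑ x : Fin N → Fin 2, (starRingEnd ℂ) (ψ x) * φ x

/-- The Pauli `X` operator on qubit `i`: `(X_i ψ)(x) = ψ(x with bit i flipped)`. -/
def pauliX {N : ℕ} (i : Fin N) (ψ : (Fin N → Fin 2) → ℂ) : (Fin N → Fin 2) → ℂ :=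
  fun x => ψ (Function.update x i (1 - x i))

/-- The operator `Z_i Z_j`: `(Z_iZ_j ψ)(x) = (-1)^(x i + x j) · ψ(x)`. -/
def pauliZZ {N : ℕ} (i j : Fin N) (ψ : (Fin N → Fin 2) → ℂ) : (Fin N → Fin 2) → ℂ :=
  fun x => (-1 : ℂ) ^ ((x i).val + (x j).val) * ψ x

/-- The edges of `G` with both endpoints in the vertex set `S` (edges of the induced subgraph). -/
def inducedEdges {α : Type*} [Fintype α] [DecidableEq α] (G : SimpleGraph α)
    [DecidableRel G.Adj] (S : Finset α) : Finset (Sym2 α) :=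
  G.edgeFinset.filter (fun e => ∀ v ∈ e, v ∈ S)

/-- The product state `φ_V`: `(1/√2)^(N - |V|)` on bit strings vanishing on `V`, zero elsewhere. -/
def phiV {N : ℕ} (V : Finset (Fin N)) : (Fin N → Fin 2) → ℂ :=
  fun x => if ∀ i ∈ V, x i = 0 then (((1 / Real.sqrt 2) ^ (N - V.card) : ℝ) : ℂ) else 0

/-- The `Z_iZ_j` term of an edge `e = s(i,j)`, applied to `ψ` and evaluated at `x`. -/
def edgeZZ {N : ℕ} (ψ : (Fin N → Fin 2) → ℂ) (x : Fin N → Fin 2) : Sym2 (Fin N) → ℂ :=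
  Sym2.lift ⟨fun i j => (-1 : ℂ) ^ ((x i).val + (x j).val) * ψ x,
    fun i j => by simp [Nat.add_comm]⟩

/-- The transverse-field Ising Hamiltonian `H = -∑_{{i,j} ∈ E_G} Z_iZ_j - g ∑_i X_i`. -/
def isingH {N : ℕ} (G : SimpleGraph (Fin N)) [DecidableRel G.Adj] (g : ℝ)
    (ψ : (Fin N → Fin 2) → ℂ) : (Fin N → Fin 2) → ℂ :=
  fun x => -(∑ e ∈ G.edgeFinset, edgeZZ ψ x e) - (g : ℂ) * ∑ i : Fin N, pauliX i ψ x

/-- The weighted Ising Hamiltonian `H = -∑_{{i,j} ∈ E_G} J_{ij} Z_iZ_j - ∑_i J_i X_i`. -/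
def weightedH {N : ℕ} (G : SimpleGraph (Fin N)) [DecidableRel G.Adj]
    (J : Sym2 (Fin N) → ℝ) (Ji : Fin N → ℝ) (ψ : (Fin N → Fin 2) → ℂ) :
    (Fin N → Fin 2) → ℂ :=
  fun x => -(∑ e ∈ G.edgeFinset, (J e : ℂ) * edgeZZ ψ x e)
    - ∑ i : Fin N, (Ji i : ℂ) * pauliX i ψ x

/-!
The expectation value is linear in `H`, so it reduces to `⟨φ_V, Z_iZ_j φ_V⟩` and `⟨φ_V, X_i φ_V⟩`.
The state `φ_V` is the normalized product of `|0⟩` on `V` and `|+⟩` off `V`. Hence `X_i φ_V = φ_V`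
for `i ∉ V`, while for `i ∈ V` the state `X_i φ_V` is supported where bit `i` is `1`, disjointly
from `φ_V`. Likewise `Z_iZ_j φ_V = φ_V` for `i, j ∈ V`; if `j ∉ V`, flipping bit `j` is a
bijection of the basis that fixes `φ_V` and negates `(-1)^(x i + x j)`, so the expectation vanishes.
-/

open Finset

lemma Finset.card_filter_forall_mem_eq {ι α : Type*} [Fintype ι] [DecidableEq ι] [Fintype α]
    (V : Finset ι) (a : α) [DecidablePred fun x : ι → α => ∀ i ∈ V, x i = a] :
    #{x : ι → α | ∀ i ∈ V, x i = a} = Fintype.card α ^ (Fintype.card ι - #V) := by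
  classical
  have hpi : ({x : ι → α | ∀ i ∈ V, x i = a} : Finset _) =
      Fintype.piFinset fun i => if i ∈ V then {a} else univ := by
    ext x
    simp only [mem_filter, mem_univ, true_and, Fintype.mem_piFinset]
    refine forall_congr' fun i => ?_
    split_ifs with hi <;> simp [hi]
  rw [hpi, Fintype.card_piFinset]
  simp [apply_ite, prod_ite, filter_not, card_sdiff]

section Qubits

variable {N : ℕ}

def flipBit (i : Fin N) (x : Fin N → Fin 2) : Fin N → Fin 2 :=
  Function.update x i (1 - x i)

lemma pauliX_apply (i : Fin N) (ψ : (Fin N → Fin 2) → ℂ) (x : Fin N → Fin 2) :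
    pauliX i ψ x = ψ (flipBit i x) := rfl

@[simp]
lemma flipBit_self (i : Fin N) (x : Fin N → Fin 2) : flipBit i x i = 1 - x i :=
  Function.update_self ..

lemma flipBit_of_ne {i j : Fin N} (h : j ≠ i) (x : Fin N → Fin 2) : flipBit i x j = x j :=
  Function.update_of_ne h ..

lemma flipBit_involutive (i : Fin N) : Function.Involutive (flipBit i) := by
  intro x
  funext j
  rcases eq_or_ne j i with rfl | hj
  · simp
  · simp [flipBit_of_ne hj]

lemma neg_one_pow_add_one_sub (m : ℕ) (b : Fin 2) :
    (-1 : ℂ) ^ (m + (1 - b).val) = -(-1 : ℂ) ^ (m + b.val) := by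
  fin_cases b <;> simp [pow_succ]

lemma pauliZZ_comm (i j : Fin N) : pauliZZ (N := N) i j = pauliZZ j i := by
  funext ψ x
  simp only [pauliZZ, Nat.add_comm]

lemma edgeZZ_mk (ψ : (Fin N → Fin 2) → ℂ) (i j : Fin N) :
    (fun x => edgeZZ ψ x s(i, j)) = pauliZZ i j ψ := rfl

lemma qInner_weightedH (G : SimpleGraph (Fin N)) [DecidableRel G.Adj] (J : Sym2 (Fin N) → ℝ)
    (Ji : Fin N → ℝ) (ψ : (Fin N → Fin 2) → ℂ) :
    qInner ψ (weightedH G J Ji ψ) =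
      -∑ e ∈ G.edgeFinset, (J e : ℂ) * qInner ψ (fun x => edgeZZ ψ x e)
        - ∑ i, (Ji i : ℂ) * qInner ψ (pauliX i ψ) := by
  simp only [qInner, weightedH, mul_sub, mul_neg, mul_sum, sum_sub_distrib, sum_neg_distrib]
  rw [sum_comm, sum_comm (s := (univ : Finset (Fin N → Fin 2)))]
  simp only [mul_left_comm]

lemma qInner_pauliZZ_eq_zero {i j : Fin N} (hij : i ≠ j) {ψ : (Fin N → Fin 2) → ℂ}
    (hψ : pauliX j ψ = ψ) : qInner ψ (pauliZZ i j ψ) = 0 := by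
  have hflip (x : Fin N → Fin 2) : ψ (flipBit j x) = ψ x := congrFun hψ x
  refine self_eq_neg.mp ?_
  calc qInner ψ (pauliZZ i j ψ)
      = ∑ x, starRingEnd ℂ (ψ (flipBit j x)) * pauliZZ i j ψ (flipBit j x) :=
        (Equiv.sum_comp (flipBit_involutive j).toPerm _).symm
    _ = -qInner ψ (pauliZZ i j ψ) := by
        simp only [qInner, pauliZZ, ← sum_neg_distrib, hflip, flipBit_self,
          flipBit_of_ne hij, neg_one_pow_add_one_sub]
        ring_nf

variable (V : Finset (Fin N))

lemma phiV_flipBit_of_notMem {i : Fin N} (hi : i ∉ V) (x : Fin N → Fin 2) :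
    phiV V (flipBit i x) = phiV V x := by
  have hV : ∀ v ∈ V, flipBit i x v = x v := fun v hv =>
    flipBit_of_ne (ne_of_mem_of_not_mem hv hi) x
  simp +contextual only [phiV, hV]

lemma pauliX_phiV_of_notMem {i : Fin N} (hi : i ∉ V) : pauliX i (phiV V) = phiV V :=
  funext (phiV_flipBit_of_notMem V hi)

lemma pauliZZ_phiV_of_mem {i j : Fin N} (hi : i ∈ V) (hj : j ∈ V) :
    pauliZZ i j (phiV V) = phiV V := by
  funext x
  by_cases hx : ∀ v ∈ V, x v = 0
  · simp [pauliZZ, hx i hi, hx j hj]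
  · simp [pauliZZ, phiV, hx]

lemma qInner_phiV_self : qInner (phiV V) (phiV V) = 1 := by
  have hsq : (2 : ℝ) ^ (N - #V) * ((1 / √2) ^ (N - #V)) ^ 2 = 1 := by
    rw [← pow_mul, mul_comm (N - #V), pow_mul, div_pow, Real.sq_sqrt zero_le_two, ← mul_pow]
    norm_num
  simp only [qInner, phiV, apply_ite (starRingEnd ℂ), Complex.conj_ofReal, map_zero, ← sq,
    ite_pow, ne_eq, OfNat.ofNat_ne_zero, not_false_eq_true, zero_pow]
  rw [← sum_filter, sum_const, card_filter_forall_mem_eq, Fintype.card_fin, Fintype.card_fin, nsmul_eq_mul]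
  exact_mod_cast hsq

lemma qInner_phiV_pauliX (i : Fin N) :
    qInner (phiV V) (pauliX i (phiV V)) = if i ∈ V then 0 else 1 := by
  split_ifs with hi
  · refine sum_eq_zero fun x _ => ?_
    by_cases hx : ∀ v ∈ V, x v = 0
    · have hflip : ¬ ∀ v ∈ V, flipBit i x v = 0 := fun h => by
        simpa [hx i hi] using h i hi
      simp [pauliX_apply, phiV, hflip]
    · simp [phiV, hx]
  · rw [pauliX_phiV_of_notMem V hi, qInner_phiV_self]

lemma qInner_phiV_pauliZZ {i j : Fin N} (hij : i ≠ j) :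
    qInner (phiV V) (pauliZZ i j (phiV V)) = if i ∈ V ∧ j ∈ V then 1 else 0 := by
  split_ifs with h
  · rw [pauliZZ_phiV_of_mem V h.1 h.2, qInner_phiV_self]
  · rcases not_and_or.mp h with hi | hj
    · rw [pauliZZ_comm]
      exact qInner_pauliZZ_eq_zero hij.symm (pauliX_phiV_of_notMem V hi)
    · exact qInner_pauliZZ_eq_zero hij (pauliX_phiV_of_notMem V hj)

lemma qInner_phiV_edgeZZ {e : Sym2 (Fin N)} (he : ¬ e.IsDiag) :
    qInner (phiV V) (fun x => edgeZZ (phiV V) x e) = if ∀ v ∈ e, v ∈ V then 1 else 0 := by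
  induction e using Sym2.inductionOn with
  | hf i j =>
    rw [edgeZZ_mk, qInner_phiV_pauliZZ V (by simpa using he)]
    simp

end Qubits

theorem stmt_12_general {N : ℕ} (G : SimpleGraph (Fin N)) [DecidableRel G.Adj]
    (J : Sym2 (Fin N) → ℝ)
    (Ji : Fin N → ℝ) (V : Finset (Fin N)) :
    qInner (phiV V) (weightedH G J Ji (phiV V)) =
      -(∑ e ∈ inducedEdges G V, (J e : ℂ)) - ∑ i ∈ Finset.univ \ V, (Ji i : ℂ) := by
  rw [qInner_weightedH, inducedEdges, sum_filter, sdiff_eq_filter, sum_filter]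
  have hedge (e) (he : e ∈ G.edgeFinset) :
      (J e : ℂ) * qInner (phiV V) (fun x => edgeZZ (phiV V) x e) =
        if ∀ v ∈ e, v ∈ V then (J e : ℂ) else 0 := by
    rw [qInner_phiV_edgeZZ V (G.not_isDiag_of_mem_edgeFinset he), mul_ite, mul_one, mul_zero]
  have hsite (i) : (Ji i : ℂ) * qInner (phiV V) (pauliX i (phiV V)) =
      if i ∉ V then (Ji i : ℂ) else 0 := by
    rw [qInner_phiV_pauliX, mul_ite, mul_zero, mul_one, ite_not]
  rw [sum_congr rfl hedge, sum_congr rfl fun i _ => hsite i]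
  -- the two sides differ only in the `Decidable` instances of the `if`s
  congr!

/-- Weighted version of Lemma "Part 1":
`⟨φ_V, H φ_V⟩ = -∑_{{i,j} ∈ E(V)} J_{ij} - ∑_{i ∉ V} J_i`. -/
theorem stmt_12 {N : ℕ} (hN : 1 ≤ N) (G : SimpleGraph (Fin N)) [DecidableRel G.Adj]
    (J : Sym2 (Fin N) → ℝ) (hJ : ∀ e ∈ G.edgeFinset, 0 ≤ J e)
    (Ji : Fin N → ℝ) (hJi : ∀ i, 0 ≤ Ji i) (V : Finset (Fin N)) :
    qInner (phiV V) (weightedH G J Ji (phiV V)) =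
      -(∑ e ∈ inducedEdges G V, (J e : ℂ)) - ∑ i ∈ Finset.univ \ V, (Ji i : ℂ) :=
  stmt_12_general G J Ji V
end
end

section
/- (Ground state of the ferromagnetic XXX Heisenberg Hamiltonian is the all-zeros Clifford state.) Let N ≥ 1, let G be a simple graph on Fin N, and let H = -∑_{{i,j} ∈ E_G} (X_iX_j + Y_iY_j + Z_iZ_j). Then for every unit vector ψ (⟨ψ, ψ⟩ = 1), Re⟨ψ, H ψ⟩ ≥ -|E_G|, and equality holds for the all-zeros basis state e₀ defined by e₀(x) = 1 if x i = 0 for all i and e₀(x) = 0 otherwise; i.e., e₀ is a ground state of H with energy -|E_G|. -/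
open scoped BigOperators Classical

noncomputable section

/-- `x` with bits `i` and `j` flipped. -/
def flip2 {N : ℕ} (x : Fin N → Fin 2) (i j : Fin N) : Fin N → Fin 2 :=
  Function.update (Function.update x i (1 - x i)) j (1 - x j)

lemma flip2_comm {N : ℕ} (x : Fin N → Fin 2) (i j : Fin N) : flip2 x i j = flip2 x j i := by
  rcases eq_or_ne i j with h | h
  · subst h; rfl
  · unfold flip2
    exact Function.update_comm h (1 - x i) (1 - x j) x

/-- The Heisenberg term `(X_iX_j + Y_iY_j + Z_iZ_j) ψ` of an edge `e = s(i,j)`, evaluated at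
`x`:  `ψ(x flipped at i,j) - (-1)^(x i + x j) ψ(x flipped at i,j) + (-1)^(x i + x j) ψ(x)`. -/
def heisTerm {N : ℕ} (ψ : (Fin N → Fin 2) → ℂ) (x : Fin N → Fin 2) : Sym2 (Fin N) → ℂ :=
  Sym2.lift ⟨fun i j =>
    ψ (flip2 x i j) - (-1 : ℂ) ^ ((x i).val + (x j).val) * ψ (flip2 x i j)
      + (-1 : ℂ) ^ ((x i).val + (x j).val) * ψ x,
    fun i j => by simp [flip2_comm, Nat.add_comm]⟩

/-- The ferromagnetic XXX Heisenberg Hamiltonian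
`H = -∑_{{i,j} ∈ E_G} (X_iX_j + Y_iY_j + Z_iZ_j)`. -/
def heisH {N : ℕ} (G : SimpleGraph (Fin N)) [DecidableRel G.Adj]
    (ψ : (Fin N → Fin 2) → ℂ) : (Fin N → Fin 2) → ℂ :=
  fun x => -(∑ e ∈ G.edgeFinset, heisTerm ψ x e)

/-- The all-zeros basis state `e₀`. -/
def allZeros {N : ℕ} : (Fin N → Fin 2) → ℂ :=
  fun x => if ∀ i, x i = 0 then 1 else 0

/-!
Each edge term `X_iX_j + Y_iY_j + Z_iZ_j` acts as `2 P_{ij} - 1`, where `P_{ij}` permutes the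
coordinates of a state by swapping qubits `i` and `j`. Since a coordinate permutation is unitary,
`Re ⟨ψ, P_{ij} ψ⟩ ≤ ‖ψ‖²`, so each edge contributes at least `-‖ψ‖²` to `⟨ψ, H ψ⟩`. States invariant
under all qubit swaps, such as `e₀`, attain this bound on every edge.
-/

lemma neg_one_pow_fin_two_add (a b : Fin 2) :
    (-1 : ℂ) ^ (a.val + b.val) = if a = b then 1 else -1 := by
  fin_cases a <;> fin_cases b <;> norm_num

lemma comp_swap_eq_self_of_eq {N : ℕ} {x : Fin N → Fin 2} {i j : Fin N} (h : x i = x j) :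
    x ∘ Equiv.swap i j = x := by
  funext k
  simp only [Function.comp_apply, Equiv.swap_apply_def]
  split_ifs <;> simp_all

lemma flip2_eq_comp_swap_of_ne {N : ℕ} {x : Fin N → Fin 2} {i j : Fin N} (h : x i ≠ x j) :
    flip2 x i j = x ∘ Equiv.swap i j := by
  funext k
  have flip_ne : ∀ a b : Fin 2, a ≠ b → 1 - a = b := by decide
  have hi := flip_ne _ _ h
  have hj := flip_ne _ _ (Ne.symm h)
  simp only [flip2, Function.comp_apply, Equiv.swap_apply_def, Function.update_apply]
  split_ifs <;> simp_all

lemma heisTerm_mk {N : ℕ} (ψ : (Fin N → Fin 2) → ℂ) (x : Fin N → Fin 2) (i j : Fin N) :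
    heisTerm ψ x s(i, j) = 2 * ψ (x ∘ Equiv.swap i j) - ψ x := by
  change ψ (flip2 x i j) - _ * ψ (flip2 x i j) + _ * ψ x = _
  rw [neg_one_pow_fin_two_add]
  by_cases h : x i = x j
  · rw [if_pos h, comp_swap_eq_self_of_eq h]
    ring
  · rw [if_neg h, flip2_eq_comp_swap_of_ne h]
    ring

lemma qInner_self {N : ℕ} (ψ : (Fin N → Fin 2) → ℂ) :
    qInner ψ ψ = ((∑ x, ‖ψ x‖ ^ 2 : ℝ) : ℂ) := by
  push_cast
  exact Finset.sum_congr rfl fun x _ => Complex.conj_mul' (ψ x)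

lemma re_conj_mul_le (a b : ℂ) : 2 * (starRingEnd ℂ a * b).re ≤ ‖a‖ ^ 2 + ‖b‖ ^ 2 :=
  calc 2 * (starRingEnd ℂ a * b).re ≤ 2 * ‖a‖ * ‖b‖ := by
        rw [mul_assoc]
        gcongr
        simpa using Complex.re_le_norm (starRingEnd ℂ a * b)
    _ ≤ ‖a‖ ^ 2 + ‖b‖ ^ 2 := two_mul_le_add_sq _ _

lemma re_sum_conj_mul_comp_perm_le {ι : Type*} [Fintype ι] (f : ι → ℂ) (σ : Equiv.Perm ι) :
    (∑ x, starRingEnd ℂ (f x) * f (σ x)).re ≤ ∑ x, ‖f x‖ ^ 2 := by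
  have h := Finset.sum_le_sum fun x (_ : x ∈ Finset.univ) => re_conj_mul_le (f x) (f (σ x))
  rw [← Finset.mul_sum, Finset.sum_add_distrib, Equiv.sum_comp σ (fun x => ‖f x‖ ^ 2)] at h
  rw [Complex.re_sum]
  linarith

lemma re_qInner_heisTerm_le {N : ℕ} (ψ : (Fin N → Fin 2) → ℂ) (e : Sym2 (Fin N)) :
    (qInner ψ (fun x => heisTerm ψ x e)).re ≤ (qInner ψ ψ).re := by
  induction e using Sym2.ind with
  | _ i j =>
    have hswap : (∑ x, starRingEnd ℂ (ψ x) * ψ (x ∘ Equiv.swap i j)).re ≤ ∑ x, ‖ψ x‖ ^ 2 :=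
      re_sum_conj_mul_comp_perm_le ψ <|
        Function.Involutive.toPerm (· ∘ Equiv.swap i j) fun x => by funext k; simp
    have hexpand : qInner ψ (fun x => heisTerm ψ x s(i, j))
        = 2 * ∑ x, starRingEnd ℂ (ψ x) * ψ (x ∘ Equiv.swap i j) - qInner ψ ψ := by
      simp only [qInner, heisTerm_mk, Finset.mul_sum, ← Finset.sum_sub_distrib]
      exact Finset.sum_congr rfl fun x _ => by ring
    rw [hexpand, qInner_self, Complex.sub_re, Complex.ofReal_re]
    rw [show (2 : ℂ) = ((2 : ℝ) : ℂ) by norm_num, Complex.re_ofReal_mul]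
    linarith

lemma qInner_heisH {N : ℕ} (G : SimpleGraph (Fin N)) [DecidableRel G.Adj]
    (ψ φ : (Fin N → Fin 2) → ℂ) :
    qInner ψ (heisH G φ) = -∑ e ∈ G.edgeFinset, qInner ψ (fun x => heisTerm φ x e) := by
  simp only [qInner, heisH, mul_neg, Finset.mul_sum, Finset.sum_neg_distrib]
  rw [Finset.sum_comm]

lemma heisH_eq_neg_card_mul_of_swap_invariant {N : ℕ} (G : SimpleGraph (Fin N)) [DecidableRel G.Adj]
    {ψ : (Fin N → Fin 2) → ℂ} (hψ : ∀ x i j, ψ (x ∘ Equiv.swap i j) = ψ x) :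
    heisH G ψ = fun x => -(G.edgeFinset.card : ℂ) * ψ x := by
  funext x
  have hterm : ∀ e : Sym2 (Fin N), heisTerm ψ x e = ψ x := fun e => by
    induction e using Sym2.ind with
    | _ i j => rw [heisTerm_mk, hψ]; ring
  simp [heisH, hterm]

lemma allZeros_comp_swap {N : ℕ} (x : Fin N → Fin 2) (i j : Fin N) :
    allZeros (x ∘ Equiv.swap i j) = allZeros x := by
  simp only [allZeros, Function.comp_apply]
  congr 1
  exact propext ((Equiv.swap i j).forall_congr_right (q := fun k => x k = 0))

lemma qInner_allZeros_self {N : ℕ} : qInner (allZeros (N := N)) allZeros = 1 := by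
  rw [qInner, Finset.sum_eq_single (fun _ => 0)]
  · simp [allZeros]
  · intro x _ hx
    have : ¬∀ i, x i = 0 := fun h => hx (funext h)
    simp [allZeros, this]
  · simp

theorem stmt_19_general {N : ℕ} (G : SimpleGraph (Fin N)) [DecidableRel G.Adj] :
    (∀ ψ : (Fin N → Fin 2) → ℂ, qInner ψ ψ = 1 →
      -((G.edgeFinset.card : ℝ)) ≤ (qInner ψ (heisH G ψ)).re) ∧
    qInner allZeros (heisH G allZeros) = -((G.edgeFinset.card : ℂ)) := by
  constructor
  · intro ψ hψ
    have hedge : ∀ e ∈ G.edgeFinset, (qInner ψ (fun x => heisTerm ψ x e)).re ≤ 1 :=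
      fun e _ => by simpa [hψ] using re_qInner_heisTerm_le ψ e
    have hsum := Finset.sum_le_sum hedge
    rw [qInner_heisH, Complex.neg_re, Complex.re_sum]
    simp only [Finset.sum_const, nsmul_eq_mul, mul_one] at hsum
    linarith
  · rw [heisH_eq_neg_card_mul_of_swap_invariant G allZeros_comp_swap]
    simp only [qInner, mul_left_comm _ (-(G.edgeFinset.card : ℂ)), ← Finset.mul_sum]
    rw [← qInner, qInner_allZeros_self, mul_one]

/-- `e₀` is a ground state of the ferromagnetic XXX Heisenberg Hamiltonian,
with energy `-|E_G|`. -/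
theorem stmt_19 {N : ℕ} (hN : 1 ≤ N) (G : SimpleGraph (Fin N)) [DecidableRel G.Adj] :
    (∀ ψ : (Fin N → Fin 2) → ℂ, qInner ψ ψ = 1 →
      -((G.edgeFinset.card : ℝ)) ≤ (qInner ψ (heisH G ψ)).re) ∧
    qInner allZeros (heisH G allZeros) = -((G.edgeFinset.card : ℂ)) :=
  stmt_19_general G
end
end
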